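/- arXiv:1504.06711 — 4 statements merged into one kernel-verified Lean document; each statement's English description precedes it below -/
import Mathlib

section
/- Let a∞, b∞, c∞ > 0 satisfy a∞^α b∞^β = c∞^γ, γa∞² + αc∞² = M1 and γb∞² + βc∞² = M2. If a, b, c ≥ 0 satisfy γa² + αc² = M1 and γb² + βc² = M2, then there exists a constant C = C(α,β,γ,M1,M2) > 0 (independent of a,b,c) such that (a−a∞)² + (b−b∞)² + (c−c∞)² ≤ C·(a^α b^β − c^γ)². -/
open Real

/-
On the constraint set `γ (a² - a∞²) = α (c∞² - c²)`, so `|a - a∞|` and `|c - c∞|` control each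
other (likewise for `b`), and `a`, `b` move opposite to `c`. It therefore suffices to bound
`|c - c∞|` by the reaction defect `a^α b^β - c^γ`. If `c ≥ c∞` then `a^α b^β ≤ c∞^γ`, and the
tangent line of the convex `t ↦ t^γ` at `c∞` gives `c^γ - a^α b^β ≥ γ c∞^(γ-1) (c - c∞)`. If
`c ≤ c∞` then `c^γ ≤ a∞^α b∞^β`, and the tangent line of `t ↦ t^α` at `a∞` gives
`a^α b^β - c^γ ≥ α a∞^(α-1) b∞^β (a - a∞)`, which in turn controls `c∞ - c`.
-/

lemma rpow_add_mul_sub_le_rpow {x y p : ℝ} (hx : 0 < x) (hy : 0 ≤ y) (hp : 1 ≤ p) :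
    x ^ p + p * x ^ (p - 1) * (y - x) ≤ y ^ p := by
  have hs : -1 ≤ (y - x) / x := by rw [le_div_iff₀ hx]; linarith
  have h := one_add_mul_self_le_rpow_one_add hs hp
  rw [show 1 + (y - x) / x = y / x by field_simp; ring, div_rpow hy hx.le] at h
  have hxp : 0 < x ^ p := rpow_pos_of_pos hx p
  rw [le_div_iff₀ hxp] at h
  rw [rpow_sub_one hx.ne']
  calc x ^ p + p * (x ^ p / x) * (y - x) = (1 + p * ((y - x) / x)) * x ^ p := by ring
    _ ≤ y ^ p := h

lemma sq_le_sq_div_sq_of_mul_le {k x y : ℝ} (hk : 0 < k) (hx : 0 ≤ x) (h : k * x ≤ y) :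
    x ^ 2 ≤ y ^ 2 / k ^ 2 := by
  rw [le_div_iff₀ (by positivity)]
  calc x ^ 2 * k ^ 2 = (k * x) ^ 2 := by ring
    _ ≤ y ^ 2 := pow_le_pow_left₀ (mul_nonneg hk.le hx) h 2

section Conservation

variable {γ α M x x₀ c c₀ : ℝ}

lemma le_of_le_of_conservation (hγ : 0 < γ) (hα : 0 ≤ α) (hx₀ : 0 ≤ x₀) (hc₀ : 0 ≤ c₀)
    (h : γ * x ^ 2 + α * c ^ 2 = γ * x₀ ^ 2 + α * c₀ ^ 2) (hc : c₀ ≤ c) : x ≤ x₀ := by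
  by_contra! hlt
  have hx : x₀ ^ 2 < x ^ 2 := pow_lt_pow_left₀ hlt hx₀ two_ne_zero
  have hc' : c₀ ^ 2 ≤ c ^ 2 := pow_le_pow_left₀ hc₀ hc 2
  nlinarith [mul_lt_mul_of_pos_left hx hγ, mul_le_mul_of_nonneg_left hc' hα]

lemma sq_sub_le_of_conservation (hγ : 0 < γ) (hα : 0 ≤ α) (hx : 0 ≤ x) (hx₀ : 0 < x₀)
    (h : γ * x ^ 2 + α * c ^ 2 = M) (h₀ : γ * x₀ ^ 2 + α * c₀ ^ 2 = M) :
    (x - x₀) ^ 2 ≤ 4 * α * M / (γ * x₀) ^ 2 * (c - c₀) ^ 2 := by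
  have hfactor : (γ * (x + x₀)) ^ 2 * (x - x₀) ^ 2 = (α * (c + c₀)) ^ 2 * (c - c₀) ^ 2 := by
    linear_combination (γ * (x ^ 2 - x₀ ^ 2) - α * (c ^ 2 - c₀ ^ 2)) * (h - h₀)
  have hlow : (γ * x₀) ^ 2 ≤ (γ * (x + x₀)) ^ 2 :=
    pow_le_pow_left₀ (by positivity) (by nlinarith) 2
  have hup : (α * (c + c₀)) ^ 2 ≤ 4 * α * M := by
    nlinarith [mul_nonneg hα (mul_nonneg hα (sq_nonneg (c - c₀))),
      mul_nonneg hα (mul_nonneg hγ.le (sq_nonneg x)),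
      mul_nonneg hα (mul_nonneg hγ.le (sq_nonneg x₀))]
  rw [div_mul_eq_mul_div, le_div_iff₀ (by positivity)]
  calc (x - x₀) ^ 2 * (γ * x₀) ^ 2 ≤ (γ * (x + x₀)) ^ 2 * (x - x₀) ^ 2 := by
        rw [mul_comm]; exact mul_le_mul_of_nonneg_right hlow (sq_nonneg _)
    _ = (α * (c + c₀)) ^ 2 * (c - c₀) ^ 2 := hfactor
    _ ≤ 4 * α * M * (c - c₀) ^ 2 := mul_le_mul_of_nonneg_right hup (sq_nonneg _)

end Conservation

section Reaction

variable {α β γ a₀ b₀ c₀ a b c : ℝ}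

lemma mul_sub_le_rpow_sub_rpow_mul_rpow (hα : 0 ≤ α) (hβ : 0 ≤ β) (hγ : 1 ≤ γ) (hc₀ : 0 < c₀)
    (heq : a₀ ^ α * b₀ ^ β = c₀ ^ γ) (ha : 0 ≤ a) (hb : 0 ≤ b) (haa : a ≤ a₀) (hbb : b ≤ b₀)
    (hcc : c₀ ≤ c) :
    γ * c₀ ^ (γ - 1) * (c - c₀) ≤ c ^ γ - a ^ α * b ^ β := by
  have hab : a ^ α * b ^ β ≤ c₀ ^ γ := heq ▸
    mul_le_mul (rpow_le_rpow ha haa hα) (rpow_le_rpow hb hbb hβ) (rpow_nonneg hb β)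
      (rpow_nonneg (ha.trans haa) α)
  linarith [rpow_add_mul_sub_le_rpow hc₀ (hc₀.le.trans hcc) hγ]

lemma mul_sub_le_rpow_mul_rpow_sub_rpow (hα : 1 ≤ α) (hβ : 0 ≤ β) (hγ : 0 ≤ γ) (ha₀ : 0 < a₀)
    (hb₀ : 0 ≤ b₀) (heq : a₀ ^ α * b₀ ^ β = c₀ ^ γ) (hc : 0 ≤ c) (haa : a₀ ≤ a) (hbb : b₀ ≤ b)
    (hcc : c ≤ c₀) :
    α * a₀ ^ (α - 1) * b₀ ^ β * (a - a₀) ≤ a ^ α * b ^ β - c ^ γ := by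
  have hb : a ^ α * b₀ ^ β ≤ a ^ α * b ^ β :=
    mul_le_mul_of_nonneg_left (rpow_le_rpow hb₀ hbb hβ) (rpow_nonneg (ha₀.le.trans haa) α)
  have ha : (a₀ ^ α + α * a₀ ^ (α - 1) * (a - a₀)) * b₀ ^ β ≤ a ^ α * b₀ ^ β :=
    mul_le_mul_of_nonneg_right (rpow_add_mul_sub_le_rpow ha₀ (ha₀.le.trans haa) hα)
      (rpow_nonneg hb₀ β)
  have hc' : c ^ γ ≤ c₀ ^ γ := rpow_le_rpow hc hcc hγ
  nlinarith

lemma sq_sub_le_mul_sq_rpow_mul_rpow_sub_rpow {M₁ M₂ : ℝ} (hα : 1 ≤ α) (hβ : 0 ≤ β) (hγ : 1 ≤ γ)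
    (ha₀ : 0 < a₀) (hb₀ : 0 < b₀) (hc₀ : 0 < c₀) (heq : a₀ ^ α * b₀ ^ β = c₀ ^ γ)
    (ha : 0 ≤ a) (hb : 0 ≤ b) (hc : 0 ≤ c)
    (h₁ : γ * a ^ 2 + α * c ^ 2 = M₁) (h₁₀ : γ * a₀ ^ 2 + α * c₀ ^ 2 = M₁)
    (h₂ : γ * b ^ 2 + β * c ^ 2 = M₂) (h₂₀ : γ * b₀ ^ 2 + β * c₀ ^ 2 = M₂) :
    (c - c₀) ^ 2 ≤ (1 / (γ * c₀ ^ (γ - 1)) ^ 2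
        + 4 * γ * M₁ / (α * c₀) ^ 2 / (α * a₀ ^ (α - 1) * b₀ ^ β) ^ 2)
      * (a ^ α * b ^ β - c ^ γ) ^ 2 := by
  have hα₀ : 0 < α := by linarith
  have hγ₀ : 0 < γ := by linarith
  have hM₁ : 0 ≤ M₁ := h₁₀ ▸ by positivity
  have hD : 0 ≤ (a ^ α * b ^ β - c ^ γ) ^ 2 := sq_nonneg _
  rw [add_mul]
  rcases le_total c₀ c with hcc | hcc
  · have haa := le_of_le_of_conservation hγ₀ hα₀.le ha₀.le hc₀.le (h₁.trans h₁₀.symm) hcc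
    have hbb := le_of_le_of_conservation hγ₀ hβ hb₀.le hc₀.le (h₂.trans h₂₀.symm) hcc
    have h := sq_le_sq_div_sq_of_mul_le (by positivity) (sub_nonneg.2 hcc)
      (mul_sub_le_rpow_sub_rpow_mul_rpow hα₀.le hβ hγ hc₀ heq ha hb haa hbb hcc)
    have hK : 0 ≤ 4 * γ * M₁ / (α * c₀) ^ 2 / (α * a₀ ^ (α - 1) * b₀ ^ β) ^ 2 := by positivity
    calc (c - c₀) ^ 2 ≤ (c ^ γ - a ^ α * b ^ β) ^ 2 / (γ * c₀ ^ (γ - 1)) ^ 2 := h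
      _ = 1 / (γ * c₀ ^ (γ - 1)) ^ 2 * (a ^ α * b ^ β - c ^ γ) ^ 2 := by ring
      _ ≤ _ := le_add_of_nonneg_right (mul_nonneg hK hD)
  · have haa := le_of_le_of_conservation hγ₀ hα₀.le ha hc (h₁₀.trans h₁.symm) hcc
    have hbb := le_of_le_of_conservation hγ₀ hβ hb hc (h₂₀.trans h₂.symm) hcc
    have hca := sq_sub_le_of_conservation hα₀ hγ₀.le hc hc₀
      (by linarith : α * c ^ 2 + γ * a ^ 2 = M₁) (by linarith : α * c₀ ^ 2 + γ * a₀ ^ 2 = M₁)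
    have hab := sq_le_sq_div_sq_of_mul_le (by positivity) (sub_nonneg.2 haa)
      (mul_sub_le_rpow_mul_rpow_sub_rpow hα hβ hγ₀.le ha₀ hb₀.le heq hc haa hbb hcc)
    calc (c - c₀) ^ 2 ≤ 4 * γ * M₁ / (α * c₀) ^ 2 * (a - a₀) ^ 2 := hca
      _ ≤ 4 * γ * M₁ / (α * c₀) ^ 2 * ((a ^ α * b ^ β - c ^ γ) ^ 2
          / (α * a₀ ^ (α - 1) * b₀ ^ β) ^ 2) := by gcongr
      _ = 4 * γ * M₁ / (α * c₀) ^ 2 / (α * a₀ ^ (α - 1) * b₀ ^ β) ^ 2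
          * (a ^ α * b ^ β - c ^ γ) ^ 2 := by ring
      _ ≤ _ := le_add_of_nonneg_left (by positivity)

end Reaction

theorem stmt_1_general (α β γ M1 M2 ainf binf cinf : ℝ)
    (hα : 1 ≤ α) (hβ : 1 ≤ β) (hγ : 1 ≤ γ)
    (hainf : 0 < ainf) (hbinf : 0 < binf) (hcinf : 0 < cinf)
    (heq : ainf ^ α * binf ^ β = cinf ^ γ)
    (hcons1 : γ * ainf ^ 2 + α * cinf ^ 2 = M1)
    (hcons2 : γ * binf ^ 2 + β * cinf ^ 2 = M2) :
    ∃ C : ℝ, 0 < C ∧ ∀ a b c : ℝ, 0 ≤ a → 0 ≤ b → 0 ≤ c →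
      γ * a ^ 2 + α * c ^ 2 = M1 → γ * b ^ 2 + β * c ^ 2 = M2 →
      (a - ainf) ^ 2 + (b - binf) ^ 2 + (c - cinf) ^ 2 ≤ C * (a ^ α * b ^ β - c ^ γ) ^ 2 := by
  have hγ₀ : 0 < γ := by linarith
  have hM1 : 0 ≤ M1 := hcons1 ▸ by positivity
  have hM2 : 0 ≤ M2 := hcons2 ▸ by positivity
  set Ka := 4 * α * M1 / (γ * ainf) ^ 2
  set Kb := 4 * β * M2 / (γ * binf) ^ 2
  set Kc := 1 / (γ * cinf ^ (γ - 1)) ^ 2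
    + 4 * γ * M1 / (α * cinf) ^ 2 / (α * ainf ^ (α - 1) * binf ^ β) ^ 2
  refine ⟨(1 + Ka + Kb) * Kc, by positivity, fun a b c ha hb hc h₁ h₂ => ?_⟩
  have hac := sq_sub_le_of_conservation hγ₀ (by linarith) ha hainf h₁ hcons1
  have hbc := sq_sub_le_of_conservation hγ₀ (by linarith) hb hbinf h₂ hcons2
  have hcc := sq_sub_le_mul_sq_rpow_mul_rpow_sub_rpow hα (by linarith) hγ hainf hbinf hcinf heq
    ha hb hc h₁ hcons1 h₂ hcons2
  calc (a - ainf) ^ 2 + (b - binf) ^ 2 + (c - cinf) ^ 2 ≤ (1 + Ka + Kb) * (c - cinf) ^ 2 := by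
        linarith
    _ ≤ (1 + Ka + Kb) * (Kc * (a ^ α * b ^ β - c ^ γ) ^ 2) := by gcongr
    _ = (1 + Ka + Kb) * Kc * (a ^ α * b ^ β - c ^ γ) ^ 2 := by ring

theorem stmt_1 (α β γ M1 M2 ainf binf cinf : ℝ)
    (hα : 1 ≤ α) (hβ : 1 ≤ β) (hγ : 1 ≤ γ) (hM1 : 0 < M1) (hM2 : 0 < M2)
    (hainf : 0 < ainf) (hbinf : 0 < binf) (hcinf : 0 < cinf)
    (heq : ainf ^ α * binf ^ β = cinf ^ γ)
    (hcons1 : γ * ainf ^ 2 + α * cinf ^ 2 = M1)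
    (hcons2 : γ * binf ^ 2 + β * cinf ^ 2 = M2) :
    ∃ C : ℝ, 0 < C ∧ ∀ a b c : ℝ, 0 ≤ a → 0 ≤ b → 0 ≤ c →
      γ * a ^ 2 + α * c ^ 2 = M1 → γ * b ^ 2 + β * c ^ 2 = M2 →
      (a - ainf) ^ 2 + (b - binf) ^ 2 + (c - cinf) ^ 2 ≤ C * (a ^ α * b ^ β - c ^ γ) ^ 2 :=
  stmt_1_general α β γ M1 M2 ainf binf cinf hα hβ hγ hainf hbinf hcinf heq hcons1 hcons2
end

section
/- Let Ω ⊂ ℝ^N be a measurable set with measure 1, and u : Ω → [0,∞) integrable with mean ū = ∫_Ω u. If ū > 0, then ∫_Ω u·ln(u/ū) dx ≥ (1/(2ū))·(∫_Ω |u − ū| dx)². (Cziszar–Kullback–Pinsker inequality for nonnegative functions.) -/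
/-!
Pointwise, `3 (t - 1)² ≤ (2t + 4) (t log t + 1 - t)` for `t ≥ 0`. Applied to `t = u / ū` it gives
`|u - ū|² ≤ g h` with `g = (2u + 4ū)/3` and `h = u log (u/ū) + ū - u`, and Cauchy–Schwarz bounds
`(∫ |u - ū|)²` by `∫ g · ∫ h = 2ū · ∫ u log (u/ū)`.
-/

open MeasureTheory Real Set InformationTheory

lemma monotoneOn_add_one_mul_log_sub_two_mul :
    MonotoneOn (fun t : ℝ => (t + 1) * log t - 2 * (t - 1)) (Ioi 0) := by
  have hderiv : ∀ x ∈ Ioi (0 : ℝ),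
      HasDerivAt (fun t : ℝ => (t + 1) * log t - 2 * (t - 1)) (log x + (x + 1) * x⁻¹ - 2) x :=
    fun x hx => ((((hasDerivAt_id' x).add_const 1).mul (hasDerivAt_log (ne_of_gt hx))).sub
      (((hasDerivAt_id' x).sub_const 1).const_mul 2)).congr_deriv (by ring)
  apply monotoneOn_of_hasDerivWithinAt_nonneg (convex_Ioi 0)
    (fun x hx => (hderiv x hx).continuousAt.continuousWithinAt)
    (fun x hx => (hderiv x (interior_subset hx)).hasDerivWithinAt)
  intro x hx
  rw [interior_Ioi, mem_Ioi] at hx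
  have hlog := one_sub_inv_le_log_of_pos hx
  have : (x + 1) * x⁻¹ = 1 + x⁻¹ := by field_simp
  linarith

lemma three_mul_sq_sub_one_le_mul_klFun {t : ℝ} (ht : 0 ≤ t) :
    3 * (t - 1) ^ 2 ≤ (2 * t + 4) * klFun t := by
  set ψ : ℝ → ℝ := fun t => (2 * t + 4) * klFun t - 3 * (t - 1) ^ 2
  have hcont : Continuous ψ := by fun_prop (disch := exact continuous_klFun)
  have hderiv : ∀ x, 0 < x → HasDerivAt ψ (4 * ((x + 1) * log x - 2 * (x - 1))) x :=
    fun x hx => ((((hasDerivAt_id' x).const_mul 2).add_const 4).mul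
      (hasDerivAt_klFun (ne_of_gt hx)) |>.sub
        ((((hasDerivAt_id' x).sub_const 1).pow 2).const_mul 3)).congr_deriv
      (by rw [klFun_apply]; push_cast; ring)
  -- `ψ'` has the sign of `t - 1` because `ψ' / 4` is monotone and vanishes at `1`
  have hmono := monotoneOn_add_one_mul_log_sub_two_mul
  have hmin : IsMinOn ψ (Ici 0) 1 := by
    apply isMinOn_Ici_of_deriv hcont.continuousAt hcont.continuousAt
    · exact fun x hx => (hderiv x hx.1).differentiableAt.differentiableWithinAt
    · exact fun x hx => (hderiv x (one_pos.trans hx)).differentiableAt.differentiableWithinAt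
    · intro x hx
      rw [(hderiv x hx.1).deriv]
      have := hmono hx.1 (mem_Ioi.2 one_pos) hx.2.le
      norm_num at this
      linarith
    · intro x hx
      rw [(hderiv x (one_pos.trans hx)).deriv]
      have := hmono (mem_Ioi.2 one_pos) (mem_Ioi.2 (one_pos.trans hx)) (le_of_lt hx)
      norm_num at this
      linarith
  have := hmin (mem_Ici.2 ht)
  simp only [ψ, klFun_one] at this
  norm_num at this
  linarith

lemma sq_sub_le_mul_mul_klFun_div {v c : ℝ} (hv : 0 ≤ v) (hc : 0 < c) :
    (v - c) ^ 2 ≤ (2 * v + 4 * c) / 3 * (c * klFun (v / c)) := by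
  calc (v - c) ^ 2 = c ^ 2 / 3 * (3 * (v / c - 1) ^ 2) := by field_simp
    _ ≤ c ^ 2 / 3 * ((2 * (v / c) + 4) * klFun (v / c)) :=
      mul_le_mul_of_nonneg_left (three_mul_sq_sub_one_le_mul_klFun (div_nonneg hv hc.le))
        (by positivity)
    _ = (2 * v + 4 * c) / 3 * (c * klFun (v / c)) := by field_simp

lemma mul_self_mul_add_mul_add_nonneg_of_sq_le {a b c : ℝ} (hb : 0 ≤ b) (hc : 0 ≤ c)
    (h : a ^ 2 ≤ b * c) (l : ℝ) : 0 ≤ b * (l * l) + (-2 * a) * l + c := by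
  rcases hb.eq_or_lt with rfl | hb
  · nlinarith [sq_nonneg a]
  · nlinarith [sq_nonneg (b * l - a)]

lemma sq_integral_le_integral_mul_integral {α : Type*} [MeasurableSpace α] {μ : Measure α}
    {f g h : α → ℝ} (hf : Integrable f μ) (hg : Integrable g μ) (hh : Integrable h μ)
    (hg0 : 0 ≤ᵐ[μ] g) (hh0 : 0 ≤ᵐ[μ] h) (hfgh : ∀ᵐ x ∂μ, f x ^ 2 ≤ g x * h x) :
    (∫ x, f x ∂μ) ^ 2 ≤ (∫ x, g x ∂μ) * ∫ x, h x ∂μ := by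
  have hquad : ∀ l : ℝ,
      0 ≤ (∫ x, g x ∂μ) * (l * l) + (-2 * ∫ x, f x ∂μ) * l + ∫ x, h x ∂μ := by
    intro l
    have hnonneg : 0 ≤ ∫ x, g x * (l * l) + (-2 * f x) * l + h x ∂μ :=
      integral_nonneg_of_ae <| by
        filter_upwards [hg0, hh0, hfgh] with x hgx hhx hx
        exact mul_self_mul_add_mul_add_nonneg_of_sq_le hgx hhx hx l
    rwa [integral_add ((hg.mul_const _).fun_add ((hf.const_mul _).mul_const _)) hh,
      integral_add (hg.mul_const _) ((hf.const_mul _).mul_const _), integral_mul_const,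
      integral_mul_const, integral_const_mul] at hnonneg
  have := discrim_le_zero hquad
  rw [discrim] at this
  linarith

theorem stmt_10 {Ω : Type*} [MeasureSpace Ω] (hΩ : (volume : Measure Ω) Set.univ = 1)
    (u : Ω → ℝ) (hu : ∀ x, 0 ≤ u x) (hint : Integrable u)
    (ubar : ℝ) (hubar : ubar = ∫ x, u x) (hpos : 0 < ubar)
    (hent : Integrable (fun x => u x * Real.log (u x / ubar))) :
    1 / (2 * ubar) * (∫ x, |u x - ubar|) ^ 2 ≤ ∫ x, u x * Real.log (u x / ubar) := by
  have : IsProbabilityMeasure (volume : Measure Ω) := ⟨hΩ⟩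
  have hklFun : ∀ x, ubar * klFun (u x / ubar) = u x * log (u x / ubar) + ubar - u x := by
    intro x
    rw [klFun_apply]
    field_simp
  have hg : Integrable fun x => (2 * u x + 4 * ubar) / 3 :=
    ((hint.const_mul 2).fun_add (integrable_const _)).div_const 3
  have hh : Integrable fun x => ubar * klFun (u x / ubar) := by
    simpa only [hklFun] using (hent.fun_add (integrable_const ubar)).sub' hint
  have hCS := sq_integral_le_integral_mul_integral (hint.sub' (integrable_const ubar)).abs hg hh
    (ae_of_all _ fun x => show 0 ≤ (2 * u x + 4 * ubar) / 3 by linarith [hu x])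
    (ae_of_all _ fun x => mul_nonneg hpos.le (klFun_nonneg (div_nonneg (hu x) hpos.le)))
    (ae_of_all _ fun x => (sq_abs _).trans_le (sq_sub_le_mul_mul_klFun_div (hu x) hpos))
  have hG : ∫ x, (2 * u x + 4 * ubar) / 3 = 2 * ubar := by
    rw [integral_div, integral_add (hint.const_mul 2) (integrable_const _), integral_const_mul,
      integral_const, ← hubar]
    simp only [probReal_univ, smul_eq_mul, one_mul]
    ring
  have hH : ∫ x, ubar * klFun (u x / ubar) = ∫ x, u x * log (u x / ubar) := by
    simp only [hklFun]
    rw [integral_sub (hent.fun_add (integrable_const ubar)) hint,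
      integral_add hent (integrable_const _), integral_const, ← hubar]
    simp
  rw [hG, hH] at hCS
  rw [one_div_mul_eq_div, div_le_iff₀ (by positivity)]
  linarith
end

section
/- Let Ω have measure 1 and let u, v, w : Ω → [0,∞) be measurable with ∫(γu + αw) = M1 = γa∞ + αc∞ and ∫(γv + βw) = M2 = γb∞ + βc∞, where a∞, b∞, c∞ > 0, a∞^α b∞^β = c∞^γ. Then E(u,v,w) − E(a∞,b∞,c∞) ≥ C·(‖u−a∞‖_{L¹}² + ‖v−b∞‖_{L¹}² + ‖w−c∞‖_{L¹}²) for a constant C = C(M1,M2,α,β,γ) > 0, where E(u,v,w) = ∫(u(ln u −1) + v(ln v −1) + w(ln w −1)). -/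
open MeasureTheory Real

/-!
Write `φ(s) = s (log s - 1)` and `D_a(s) = φ(s) - φ(a) - φ'(a) (s - a)` (`relEntropyDensity a s`).
Since `log a∞^α b∞^β = log c∞^γ` and the conservation laws fix `γ ∫u + α ∫w` and `γ ∫v + β ∫w`,
the linear terms `log a∞ (∫u - a∞) + log b∞ (∫v - b∞) + log c∞ (∫w - c∞)` cancel, so the entropy
gap is `∫ D_{a∞}(u) + ∫ D_{b∞}(v) + ∫ D_{c∞}(w)`. Pointwise `D_a(s) ≥ (√s - √a)²`, and
`|s - a| = |√s - √a| (√s + √a)`, so by Cauchy–Schwarz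
`(∫ |u - a|)² ≤ ∫ D_a(u) · ∫ (√u + √a)² ≤ (2 ∫u + 2a) ∫ D_a(u)`,
where `∫u` is bounded by the conservation laws.
-/

noncomputable def relEntropyDensity (a s : ℝ) : ℝ :=
  s * (log s - 1) - a * (log a - 1) - log a * (s - a)

theorem sq_sqrt_sub_sqrt_le_relEntropyDensity {a s : ℝ} (ha : 0 < a) (hs : 0 ≤ s) :
    (√s - √a) ^ 2 ≤ relEntropyDensity a s := by
  rcases hs.eq_or_lt with rfl | hs
  · simp only [relEntropyDensity, sqrt_zero, zero_sub, neg_sq, sq_sqrt ha.le, log_zero]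
    linarith
  set t := √s / √a
  have ht : 0 < t := by positivity
  have hlog : log t = (log s - log a) / 2 := by
    rw [log_div (by positivity) (by positivity), log_sqrt hs.le, log_sqrt ha.le]; ring
  have hinv : s * t⁻¹ = √s * √a := by
    have : √s ≠ 0 := by positivity
    rw [inv_div]; field_simp; rw [sq_sqrt hs.le]
  -- `relEntropyDensity a s - (√s - √a) ^ 2 = 2 * s * (log t - 1 + t⁻¹)`
  have key := mul_le_mul_of_nonneg_left (one_sub_inv_le_log_of_pos ht) hs.le
  rw [mul_sub, mul_one, hinv, hlog] at key
  unfold relEntropyDensity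
  linarith [sq_sqrt hs.le, sq_sqrt ha.le]

theorem abs_sub_eq_abs_sqrt_sub_sqrt_mul {a s : ℝ} (ha : 0 ≤ a) (hs : 0 ≤ s) :
    |s - a| = |√s - √a| * (√s + √a) := by
  rw [← abs_of_nonneg (by positivity : 0 ≤ √s + √a), ← abs_mul]
  ring_nf
  rw [sq_sqrt hs, sq_sqrt ha]

theorem sq_integral_mul_le_of_nonneg {Ω : Type*} [MeasurableSpace Ω] {μ : Measure Ω}
    {f g : Ω → ℝ} (hf0 : 0 ≤ᵐ[μ] f) (hg0 : 0 ≤ᵐ[μ] g) (hf : MemLp f 2 μ) (hg : MemLp g 2 μ) :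
    (∫ x, f x * g x ∂μ) ^ 2 ≤ (∫ x, f x ^ 2 ∂μ) * ∫ x, g x ^ 2 ∂μ := by
  have h := integral_mul_le_Lp_mul_Lq_of_nonneg .two_two hf0 hg0 (by simpa using hf)
    (by simpa using hg)
  simp only [rpow_two, ← sqrt_eq_rpow] at h
  have hfg : 0 ≤ ∫ x, f x * g x ∂μ :=
    integral_nonneg_of_ae (by filter_upwards [hf0, hg0] with x hf hg; exact mul_nonneg hf hg)
  calc (∫ x, f x * g x ∂μ) ^ 2 ≤ (√(∫ x, f x ^ 2 ∂μ) * √(∫ x, g x ^ 2 ∂μ)) ^ 2 :=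
        pow_le_pow_left₀ hfg h 2
    _ = _ := by
      rw [mul_pow, sq_sqrt (integral_nonneg fun x => sq_nonneg _),
        sq_sqrt (integral_nonneg fun x => sq_nonneg _)]

theorem relEntropyDensity_nonneg {a s : ℝ} (ha : 0 < a) (hs : 0 ≤ s) :
    0 ≤ relEntropyDensity a s :=
  (sq_nonneg _).trans (sq_sqrt_sub_sqrt_le_relEntropyDensity ha hs)

section Integral

variable {Ω : Type*} [MeasurableSpace Ω] {μ : Measure Ω} {u : Ω → ℝ} {a : ℝ}

theorem integrable_relEntropyDensity [IsFiniteMeasure μ] (hu : Integrable u μ)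
    (hφ : Integrable (fun x => u x * (log (u x) - 1)) μ) :
    Integrable (fun x => relEntropyDensity a (u x)) μ :=
  (hφ.sub (integrable_const _)).sub ((hu.sub (integrable_const a)).const_mul _)

theorem integral_relEntropyDensity [IsProbabilityMeasure μ] (hu : Integrable u μ)
    (hφ : Integrable (fun x => u x * (log (u x) - 1)) μ) :
    ∫ x, relEntropyDensity a (u x) ∂μ
      = ∫ x, u x * (log (u x) - 1) ∂μ - a * (log a - 1) - log a * (∫ x, u x ∂μ - a) := by
  have hφa : Integrable (fun x => u x * (log (u x) - 1) - a * (log a - 1)) μ :=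
    hφ.sub (integrable_const _)
  have hua : Integrable (fun x => u x - a) μ := hu.sub (integrable_const a)
  simp only [relEntropyDensity]
  rw [integral_sub hφa (hua.const_mul _), integral_sub hφ (integrable_const _),
    integral_const_mul (log a), integral_sub hu (integrable_const a)]
  simp

theorem integral_entropy_sub_eq_add_integral_relEntropyDensity [IsProbabilityMeasure μ]
    {v w : Ω → ℝ} {b c : ℝ} (hu : Integrable u μ) (hv : Integrable v μ) (hw : Integrable w μ)
    (hφu : Integrable (fun x => u x * (log (u x) - 1)) μ)
    (hφv : Integrable (fun x => v x * (log (v x) - 1)) μ)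
    (hφw : Integrable (fun x => w x * (log (w x) - 1)) μ)
    (hlin : log a * (∫ x, u x ∂μ - a) + log b * (∫ x, v x ∂μ - b) + log c * (∫ x, w x ∂μ - c) = 0) :
    (∫ x, (u x * (log (u x) - 1) + v x * (log (v x) - 1) + w x * (log (w x) - 1)) ∂μ)
        - (a * (log a - 1) + b * (log b - 1) + c * (log c - 1))
      = (∫ x, relEntropyDensity a (u x) ∂μ) + (∫ x, relEntropyDensity b (v x) ∂μ)
        + ∫ x, relEntropyDensity c (w x) ∂μ := by
  rw [integral_add (by fun_prop) hφw, integral_add hφu hφv, integral_relEntropyDensity hu hφu,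
    integral_relEntropyDensity hv hφv, integral_relEntropyDensity hw hφw]
  linarith

theorem integral_relEntropyDensity_nonneg (ha : 0 < a) (hu0 : ∀ x, 0 ≤ u x) :
    0 ≤ ∫ x, relEntropyDensity a (u x) ∂μ :=
  integral_nonneg fun x => relEntropyDensity_nonneg ha (hu0 x)

theorem sq_integral_abs_sub_le [IsProbabilityMeasure μ] (ha : 0 < a) (hu0 : ∀ x, 0 ≤ u x)
    (hu : Integrable u μ) (hφ : Integrable (fun x => u x * (log (u x) - 1)) μ) :
    (∫ x, |u x - a| ∂μ) ^ 2
      ≤ (2 * ∫ x, u x ∂μ + 2 * a) * ∫ x, relEntropyDensity a (u x) ∂μ := by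
  have hsqrt : MemLp (fun x => √(u x)) 2 μ :=
    (memLp_two_iff_integrable_sq (continuous_sqrt.comp_aestronglyMeasurable hu.1)).2
      (hu.congr (ae_of_all _ fun x => (sq_sqrt (hu0 x)).symm))
  have hf : MemLp (fun x => |√(u x) - √a|) 2 μ := (hsqrt.sub (memLp_const _)).norm
  have hg : MemLp (fun x => √(u x) + √a) 2 μ := hsqrt.add (memLp_const _)
  have hf_sq : ∫ x, |√(u x) - √a| ^ 2 ∂μ ≤ ∫ x, relEntropyDensity a (u x) ∂μ :=
    integral_mono hf.integrable_sq (integrable_relEntropyDensity hu hφ) fun x => by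
      simpa only [sq_abs] using sq_sqrt_sub_sqrt_le_relEntropyDensity ha (hu0 x)
  have hg_sq : ∫ x, (√(u x) + √a) ^ 2 ∂μ ≤ 2 * ∫ x, u x ∂μ + 2 * a := by
    calc ∫ x, (√(u x) + √a) ^ 2 ∂μ ≤ ∫ x, 2 * (u x + a) ∂μ :=
          integral_mono hg.integrable_sq ((hu.add (integrable_const a)).const_mul 2) fun x => by
            simpa only [sq_sqrt (hu0 x), sq_sqrt ha.le] using add_sq_le (a := √(u x)) (b := √a)
      _ = 2 * ∫ x, u x ∂μ + 2 * a := by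
          rw [integral_const_mul, integral_add hu (integrable_const a)]; simp; ring
  calc (∫ x, |u x - a| ∂μ) ^ 2 = (∫ x, |√(u x) - √a| * (√(u x) + √a) ∂μ) ^ 2 := by
        simp only [abs_sub_eq_abs_sqrt_sub_sqrt_mul ha.le (hu0 _)]
    _ ≤ (∫ x, |√(u x) - √a| ^ 2 ∂μ) * ∫ x, (√(u x) + √a) ^ 2 ∂μ :=
        sq_integral_mul_le_of_nonneg (ae_of_all _ fun x => abs_nonneg _)
          (ae_of_all _ fun x => by positivity) hf hg
    _ ≤ (∫ x, relEntropyDensity a (u x) ∂μ) * (2 * ∫ x, u x ∂μ + 2 * a) :=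
        mul_le_mul hf_sq hg_sq (integral_nonneg fun x => by positivity)
          (integral_relEntropyDensity_nonneg ha hu0)
    _ = _ := mul_comm _ _

end Integral

theorem log_mul_sub_add_eq_zero {α β γ a b c A B C : ℝ} (hγ : γ ≠ 0) (ha : 0 < a) (hb : 0 < b)
    (hc : 0 < c) (heq : a ^ α * b ^ β = c ^ γ) (h₁ : γ * A + α * C = γ * a + α * c)
    (h₂ : γ * B + β * C = γ * b + β * c) :
    log a * (A - a) + log b * (B - b) + log c * (C - c) = 0 := by
  have hlog : α * log a + β * log b = γ * log c := by
    have h := congrArg log heq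
    rwa [log_mul (by positivity) (by positivity), log_rpow ha, log_rpow hb, log_rpow hc] at h
  refine mul_left_cancel₀ hγ ?_
  linear_combination log a * h₁ + log b * h₂ - (C - c) * hlog

theorem stmt_11 (α β γ M1 M2 ainf binf cinf : ℝ)
    (hα : 1 ≤ α) (hβ : 1 ≤ β) (hγ : 1 ≤ γ) (hM1 : 0 < M1) (hM2 : 0 < M2)
    (ha : 0 < ainf) (hb : 0 < binf) (hc : 0 < cinf)
    (heq : ainf ^ α * binf ^ β = cinf ^ γ)
    (hm1 : γ * ainf + α * cinf = M1) (hm2 : γ * binf + β * cinf = M2) :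
    ∃ C : ℝ, 0 < C ∧
      ∀ {Ω : Type} [MeasureSpace Ω], (volume : Measure Ω) Set.univ = 1 →
      ∀ u v w : Ω → ℝ, (∀ x, 0 ≤ u x) → (∀ x, 0 ≤ v x) → (∀ x, 0 ≤ w x) →
      Integrable u → Integrable v → Integrable w →
      Integrable (fun x => u x * (Real.log (u x) - 1)) →
      Integrable (fun x => v x * (Real.log (v x) - 1)) →
      Integrable (fun x => w x * (Real.log (w x) - 1)) →
      (∫ x, (γ * u x + α * w x)) = M1 → (∫ x, (γ * v x + β * w x)) = M2 →
      C * ((∫ x, |u x - ainf|) ^ 2 + (∫ x, |v x - binf|) ^ 2 + (∫ x, |w x - cinf|) ^ 2)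
        ≤ (∫ x, (u x * (Real.log (u x) - 1) + v x * (Real.log (v x) - 1)
              + w x * (Real.log (w x) - 1)))
          - (ainf * (Real.log ainf - 1) + binf * (Real.log binf - 1)
              + cinf * (Real.log cinf - 1)) := by
  set K := 2 * (M1 + M2 + ainf + binf + cinf)
  have hK : 0 < K := by positivity
  refine ⟨K⁻¹, inv_pos.2 hK, ?_⟩
  intro Ω _ hΩ u v w hu0 hv0 hw0 hu hv hw hφu hφv hφw hmass1 hmass2
  have : IsProbabilityMeasure (volume : Measure Ω) := ⟨hΩ⟩
  rw [integral_add (hu.const_mul γ) (hw.const_mul α), integral_const_mul,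
    integral_const_mul] at hmass1
  rw [integral_add (hv.const_mul γ) (hw.const_mul β), integral_const_mul,
    integral_const_mul] at hmass2
  have hIu : 0 ≤ ∫ x, u x := integral_nonneg hu0
  have hIv : 0 ≤ ∫ x, v x := integral_nonneg hv0
  have hIw : 0 ≤ ∫ x, w x := integral_nonneg hw0
  have hsq_le : ∀ {f : Ω → ℝ} {a : ℝ}, 0 < a → (∀ x, 0 ≤ f x) → Integrable f →
      Integrable (fun x => f x * (log (f x) - 1)) → 2 * (∫ x, f x) + 2 * a ≤ K →
      (∫ x, |f x - a|) ^ 2 ≤ K * ∫ x, relEntropyDensity a (f x) :=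
    fun ha hf0 hf hφf hfK => (sq_integral_abs_sub_le ha hf0 hf hφf).trans
      (mul_le_mul_of_nonneg_right hfK (integral_relEntropyDensity_nonneg ha hf0))
  have hXu := hsq_le ha hu0 hu hφu (by nlinarith)
  have hXv := hsq_le hb hv0 hv hφv (by nlinarith)
  have hXw := hsq_le hc hw0 hw hφw (by nlinarith)
  rw [integral_entropy_sub_eq_add_integral_relEntropyDensity hu hv hw hφu hφv hφw
    (log_mul_sub_add_eq_zero (by positivity) ha hb hc heq (hmass1.trans hm1.symm)
      (hmass2.trans hm2.symm)), inv_mul_le_iff₀ hK]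
  linarith
end

section
/- Let Ω be a bounded domain of measure 1 in which the Poincaré inequality ‖φ − ∫_Ω φ‖_{L²}² ≤ P(Ω)‖∇φ‖_{L²}² and the Sobolev inequality ‖φ‖_{L^q}² ≤ C₁‖∇φ‖_{L²}² + C₂‖φ‖_{L²}² (1/q = 1/2 − 1/N, N ≥ 3) hold. Then there is a constant L(Ω,N) such that the logarithmic Sobolev inequality ∫_Ω φ² ln(φ²/‖φ‖_{L²}²) dx ≤ L(Ω,N)·‖∇φ‖_{L²}² holds for all φ ∈ H¹(Ω). -/
/-!
Stroock's argument. Normalise `∫ φ² = 1` and put `G = ∫ ‖∇φ‖²`.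

If `G` is large, Jensen's inequality for the probability measure `φ² dx` gives
`(q/2 - 1) ∫ φ² log φ² ≤ log ∫ |φ|^q`, and the Sobolev inequality bounds the right-hand side
by `(q/2) (C₁ G / C₂ + log C₂)`, which is `O(G)` once `G` is bounded below.

If `G` is small, the Poincaré inequality makes `φ` close to its mean `m` in `L²`, and the Sobolev
inequality for `φ - m` gives `∫ |φ - m|^q ≤ (K G)^(q/2) ≤ K G` with `K = C₁⁺ + C₂ P`.
The pointwise bound `y² log y² - y² + 1 ≤ 15 (y - m)² + 3 (1 - m²)² + C_q |y - m|^q` then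
integrates to `O(G)`.
-/

open MeasureTheory Real ProbabilityTheory
open scoped ENNReal

lemma log_le_div_sub_one_add_log {x T : ℝ} (hx : 0 < x) (hT : 0 < T) :
    log x ≤ x / T - 1 + log T := by
  have h := log_le_sub_one_of_pos (div_pos hx hT)
  rw [log_div hx.ne' hT.ne'] at h
  linarith

lemma sq_le_two_div_mul_abs_rpow_add {p : ℝ} (hp : 2 ≤ p) (y : ℝ) :
    y ^ 2 ≤ 2 / p * |y| ^ p + (1 - 2 / p) := by
  have hp0 : 0 < p := by linarith
  have h := geom_mean_le_arith_mean2_weighted (w₁ := 2 / p) (w₂ := 1 - 2 / p) (by positivity)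
    (by rw [sub_nonneg, div_le_one hp0]; exact hp) (rpow_nonneg (abs_nonneg y) p) zero_le_one
    (by ring)
  rwa [← rpow_mul (abs_nonneg y), mul_div_cancel₀ _ hp0.ne', one_rpow, mul_one, mul_one,
    rpow_two, sq_abs] at h

lemma abs_rpow_eq_sq_mul_sq_rpow {y : ℝ} (hy : y ≠ 0) (p : ℝ) :
    |y| ^ p = y ^ 2 * (y ^ 2) ^ (p / 2 - 1) := by
  rw [← sq_abs, ← rpow_two, ← rpow_mul (abs_nonneg y), ← rpow_add (abs_pos.2 hy)]
  ring_nf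

-- Integrated with `T = ∫ |g|^p`, this is Jensen's inequality for `log` under `g² dμ`.
lemma mul_sq_mul_log_sq_le {p T : ℝ} (hp : 2 ≤ p) (hT : 0 < T) (y : ℝ) :
    (p / 2 - 1) * (y ^ 2 * log (y ^ 2)) ≤ |y| ^ p / T + y ^ 2 * (log T - 1) := by
  rcases eq_or_ne y 0 with rfl | hy
  · simp [zero_rpow (show p ≠ 0 by linarith)]
  have hy2 : 0 < y ^ 2 := by positivity
  have h := log_le_div_sub_one_add_log (rpow_pos_of_pos hy2 (p / 2 - 1)) hT
  rw [log_rpow hy2] at h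
  rw [abs_rpow_eq_sq_mul_sq_rpow hy]
  have := mul_le_mul_of_nonneg_left h hy2.le
  linear_combination this

lemma mul_log_sub_add_one_le_sq {u : ℝ} (hu : 0 ≤ u) : u * log u - u + 1 ≤ (u - 1) ^ 2 := by
  rcases hu.eq_or_lt with rfl | hu
  · simp
  · nlinarith [log_le_sub_one_of_pos hu]

lemma sq_mul_log_sq_le_abs_rpow {p : ℝ} (hp : 2 < p) (y : ℝ) :
    y ^ 2 * log (y ^ 2) ≤ |y| ^ p / (p / 2 - 1) := by
  have h := mul_sq_mul_log_sq_le hp.le one_pos y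
  rw [le_div_iff₀ (by linarith)]
  simp only [log_one, div_one] at h
  nlinarith [sq_nonneg y]

lemma add_sq_sub_one_sq_le {m b r : ℝ} (hm : m ^ 2 = 1 - b) (hb : 0 ≤ b) (hr : |r| ≤ 1) :
    ((m + r) ^ 2 - 1) ^ 2 ≤ 15 * r ^ 2 + 3 * b ^ 2 := by
  have hr2 : r ^ 2 ≤ 1 := by nlinarith [sq_abs r, abs_nonneg r]
  have hm2 : m ^ 2 ≤ 1 := by linarith
  have key : (m + r) ^ 2 - 1 = 2 * m * r + r ^ 2 - b := by linear_combination hm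
  rw [key]
  -- `(u + v + w)² ≤ 3 (u² + v² + w²)` with `(2 m r)² ≤ 4 r²` and `r⁴ ≤ r²`
  nlinarith [sq_nonneg (2 * m * r - r ^ 2), sq_nonneg (2 * m * r + b), sq_nonneg (r ^ 2 + b),
    mul_nonneg (sub_nonneg.2 hm2) (sq_nonneg r), mul_nonneg (sub_nonneg.2 hr2) (sq_nonneg r)]

lemma sq_mul_log_sq_sub_sq_add_one_le {p m b y : ℝ} (hp : 2 < p) (hm : m ^ 2 = 1 - b)
    (hb : 0 ≤ b) :
    y ^ 2 * log (y ^ 2) - y ^ 2 + 1 ≤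
      15 * (y - m) ^ 2 + 3 * b ^ 2 + (2 ^ p / (p / 2 - 1) + 1) * |y - m| ^ p := by
  have hp0 : 0 < p / 2 - 1 := by linarith
  rcases le_or_gt |y - m| 1 with hr | hr
  · have h := add_sq_sub_one_sq_le hm hb hr
    rw [add_sub_cancel] at h
    have : 0 ≤ (2 ^ p / (p / 2 - 1) + 1) * |y - m| ^ p := by positivity
    linarith [mul_log_sub_add_one_le_sq (sq_nonneg y)]
  · have hy : |y| ≤ 2 * |y - m| := by
      have : |m| ≤ 1 := by
        rw [← sq_le_one_iff_abs_le_one]; linarith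
      calc |y| = |m + (y - m)| := by ring_nf
        _ ≤ |m| + |y - m| := abs_add_le _ _
        _ ≤ 2 * |y - m| := by linarith
    have hyp : |y| ^ p ≤ 2 ^ p * |y - m| ^ p := by
      rw [← mul_rpow zero_le_two (abs_nonneg _)]
      exact rpow_le_rpow (abs_nonneg y) hy (by linarith)
    have h1 : 1 ≤ |y - m| ^ p := one_le_rpow hr.le (by linarith)
    have h2 : |y| ^ p / (p / 2 - 1) ≤ 2 ^ p / (p / 2 - 1) * |y - m| ^ p := by
      rw [div_mul_eq_mul_div]; gcongr
    linarith [sq_mul_log_sq_le_abs_rpow hp y, sq_nonneg (y - m), sq_nonneg b, sq_nonneg y]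

lemma le_of_rpow_two_div_le {p Y s : ℝ} (hp : 2 ≤ p) (hY : 0 ≤ Y) (hs : s ≤ 1)
    (h : Y ^ (2 / p) ≤ s) : Y ≤ s := by
  have hp0 : 0 < p := by linarith
  calc Y = (Y ^ (2 / p)) ^ (p / 2) := by
        rw [← rpow_mul hY, show 2 / p * (p / 2) = 1 by field_simp, rpow_one]
    _ ≤ s ^ (p / 2) := by gcongr
    _ ≤ s ^ (1 : ℝ) := rpow_le_rpow_of_exponent_ge' ((rpow_nonneg hY _).trans h) hs zero_le_one
      (by linarith)
    _ = s := rpow_one s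

lemma two_lt_of_one_div_eq_half_sub {q d : ℝ} (hd : 2 < d) (hq : 1 / q = 1 / 2 - 1 / d) :
    2 < q := by
  have hd' : 0 < 1 / d := by positivity
  have hq0 : 0 < q := one_div_pos.1 (by rw [hq]; linarith [one_div_lt_one_div_of_lt two_pos hd])
  exact (one_div_lt_one_div hq0 two_pos).1 (by rw [hq]; linarith)

lemma Continuous.memLp_top_restrict_of_isBounded {E F : Type*} [PseudoMetricSpace E]
    [ProperSpace E] [MeasurableSpace E] [OpensMeasurableSpace E] [NormedAddCommGroup F]
    {f : E → F} (hf : Continuous f) (μ : Measure E) {s : Set E} (hs : Bornology.IsBounded s) :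
    MemLp f ∞ (μ.restrict s) := by
  obtain ⟨C, hC⟩ := hs.isCompact_closure.exists_bound_of_continuousOn hf.continuousOn
  refine memLp_top_of_bound hf.aestronglyMeasurable C
    (ae_restrict_of_ae_restrict_of_subset subset_closure ?_)
  exact ae_restrict_of_forall_mem isClosed_closure.measurableSet hC

lemma integral_sq_mul_log_div_le_of_integral_sq_eq_one {E : Type*} [NormedAddCommGroup E]
    [NormedSpace ℝ E] [MeasurableSpace E] (μ : Measure E) {L : ℝ} (hL : 0 ≤ L)
    (h : ∀ g : E → ℝ, ContDiff ℝ 1 g → ∫ x, g x ^ 2 ∂μ = 1 →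
      ∫ x, g x ^ 2 * log (g x ^ 2) ∂μ ≤ L * ∫ x, ‖fderiv ℝ g x‖ ^ 2 ∂μ)
    {φ : E → ℝ} (hφ : ContDiff ℝ 1 φ) :
    ∫ x, φ x ^ 2 * log (φ x ^ 2 / ∫ y, φ y ^ 2 ∂μ) ∂μ ≤ L * ∫ x, ‖fderiv ℝ φ x‖ ^ 2 ∂μ := by
  set t := ∫ y, φ y ^ 2 ∂μ
  have hD : 0 ≤ ∫ x, ‖fderiv ℝ φ x‖ ^ 2 ∂μ := integral_nonneg fun _ => sq_nonneg _
  have ht0 : 0 ≤ t := integral_nonneg fun _ => sq_nonneg _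
  rcases ht0.eq_or_lt with ht | ht
  -- `φ² / 0 = 0` and `log 0 = 0`, so the left-hand side vanishes
  · simp only [← ht, div_zero, log_zero, mul_zero, integral_zero]
    positivity
  set c := (√t)⁻¹
  have ht' : t ≠ 0 := ht.ne'
  have hc : c ^ 2 = t⁻¹ := by rw [inv_pow, sq_sqrt ht.le]
  have hg := h (fun x => c * φ x) (contDiff_const.mul hφ)
  have hD' : ∀ x, ‖fderiv ℝ (fun x => c * φ x) x‖ ^ 2 = t⁻¹ * ‖fderiv ℝ φ x‖ ^ 2 := by
    intro x
    rw [fderiv_const_mul (hφ.differentiable one_ne_zero x), norm_smul, mul_pow, Real.norm_eq_abs,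
      sq_abs, hc]
  simp only [mul_pow, hc, hD', integral_const_mul] at hg
  calc ∫ x, φ x ^ 2 * log (φ x ^ 2 / t) ∂μ
        = t * ∫ x, t⁻¹ * φ x ^ 2 * log (t⁻¹ * φ x ^ 2) ∂μ := by
        rw [← integral_const_mul]
        congr 1 with x
        field_simp
    _ ≤ t * (L * (t⁻¹ * ∫ x, ‖fderiv ℝ φ x‖ ^ 2 ∂μ)) := by gcongr; exact hg (inv_mul_cancel₀ ht')
    _ = L * ∫ x, ‖fderiv ℝ φ x‖ ^ 2 ∂μ := by field_simp

section ProbabilityMeasure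

variable {α : Type*} [MeasurableSpace α] {μ : Measure α} {g : α → ℝ}

lemma MeasureTheory.MemLp.integrable_comp_of_continuous [IsFiniteMeasure μ] (hg : MemLp g ∞ μ)
    {F : ℝ → ℝ} (hF : Continuous F) : Integrable (fun x => F (g x)) μ := by
  obtain ⟨C, hC⟩ := eLpNormEssSup_lt_top_iff_isBoundedUnder.1 hg.2
  obtain ⟨D, hD⟩ := (isCompact_closedBall (0 : ℝ) C).exists_bound_of_continuousOn
    hF.continuousOn
  refine Integrable.of_bound (hF.comp_aestronglyMeasurable hg.1) D ?_
  filter_upwards [hC] with x hx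
  exact hD _ (mem_closedBall_zero_iff.2 hx)

lemma integrable_abs_rpow [IsFiniteMeasure μ] (hg : MemLp g ∞ μ) {p : ℝ} (hp : 0 ≤ p) :
    Integrable (fun x => |g x| ^ p) μ :=
  hg.integrable_comp_of_continuous (continuous_abs.rpow_const fun _ => Or.inr hp)

lemma integrable_sq_mul_log_sq [IsFiniteMeasure μ] (hg : MemLp g ∞ μ) :
    Integrable (fun x => g x ^ 2 * log (g x ^ 2)) μ :=
  hg.integrable_comp_of_continuous (F := fun y => y ^ 2 * log (y ^ 2))
    (continuous_mul_log.comp (continuous_pow 2))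

variable [IsProbabilityMeasure μ] {p : ℝ}

lemma one_le_integral_abs_rpow (hg : MemLp g ∞ μ) (hp : 2 ≤ p) (h1 : ∫ x, g x ^ 2 ∂μ = 1) :
    1 ≤ ∫ x, |g x| ^ p ∂μ := by
  have hint := (integrable_abs_rpow hg (by linarith : 0 ≤ p)).const_mul (2 / p)
  have hmono := integral_mono (hg.integrable_comp_of_continuous (continuous_pow 2))
    (hint.fun_add (integrable_const (1 - 2 / p)))
    fun x => sq_le_two_div_mul_abs_rpow_add hp (g x)
  rw [h1, integral_add hint (integrable_const _), integral_const_mul] at hmono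
  simp only [integral_const, probReal_univ, one_smul] at hmono
  have : 0 < 2 / p := by positivity
  nlinarith

lemma mul_integral_sq_mul_log_sq_le_log (hg : MemLp g ∞ μ) (hp : 2 ≤ p)
    (h1 : ∫ x, g x ^ 2 ∂μ = 1) :
    (p / 2 - 1) * ∫ x, g x ^ 2 * log (g x ^ 2) ∂μ ≤ log (∫ x, |g x| ^ p ∂μ) := by
  set X := ∫ x, |g x| ^ p ∂μ
  have hX : 0 < X := one_pos.trans_le (one_le_integral_abs_rpow hg hp h1)
  have ipX := (integrable_abs_rpow hg (by linarith : 0 ≤ p)).div_const X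
  have i2X := (hg.integrable_comp_of_continuous (continuous_pow 2)).mul_const (log X - 1)
  have hmono := integral_mono ((integrable_sq_mul_log_sq hg).const_mul (p / 2 - 1))
    (ipX.fun_add i2X) fun x => mul_sq_mul_log_sq_le hp hX (g x)
  rw [integral_const_mul, integral_add ipX i2X, integral_div, integral_mul_const, h1,
    div_self hX.ne'] at hmono
  linarith

lemma integral_sq_mul_log_sq_le_of_sobolev (hg : MemLp g ∞ μ) (hp : 2 < p)
    (h1 : ∫ x, g x ^ 2 ∂μ = 1) {S C : ℝ} (hC : 0 < C)
    (hS : (∫ x, |g x| ^ p ∂μ) ^ (2 / p) ≤ S + C) :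
    ∫ x, g x ^ 2 * log (g x ^ 2) ∂μ ≤ p / (p - 2) * (S / C + log C) := by
  set X := ∫ x, |g x| ^ p ∂μ
  have hX : 1 ≤ X := one_le_integral_abs_rpow hg hp.le h1
  have hSC : 0 < S + C := one_pos.trans_le ((one_le_rpow hX (by positivity)).trans hS)
  have hlogX : log X ≤ p / 2 * (S / C + log C) := calc
    log X = p / 2 * log (X ^ (2 / p)) := by
      rw [log_rpow (one_pos.trans_le hX)]; field_simp
    _ ≤ p / 2 * log (S + C) := by gcongr
    _ ≤ p / 2 * (S / C + log C) := by
      gcongr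
      exact (log_le_div_sub_one_add_log hSC hC).trans_eq (by rw [add_div, div_self hC.ne']; ring)
  have hent := mul_integral_sq_mul_log_sq_le_log hg hp.le h1
  rw [div_mul_eq_mul_div, le_div_iff₀ (by linarith)]
  linarith

lemma integral_sub_integral_sq (hg : MemLp g ∞ μ) :
    ∫ x, (g x - ∫ y, g y ∂μ) ^ 2 ∂μ = ∫ x, g x ^ 2 ∂μ - (∫ x, g x ∂μ) ^ 2 := by
  rw [← variance_eq_integral hg.aestronglyMeasurable.aemeasurable,
    variance_eq_sub (hg.mono_exponent le_top)]
  rfl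

lemma integral_sq_mul_log_sq_le_variance_add (hg : MemLp g ∞ μ) (hp : 2 < p)
    (h1 : ∫ x, g x ^ 2 ∂μ = 1) :
    ∫ x, g x ^ 2 * log (g x ^ 2) ∂μ ≤
      18 * ∫ x, (g x - ∫ y, g y ∂μ) ^ 2 ∂μ +
        (2 ^ p / (p / 2 - 1) + 1) * ∫ x, |g x - ∫ y, g y ∂μ| ^ p ∂μ := by
  set m := ∫ y, g y ∂μ
  set b := ∫ x, (g x - m) ^ 2 ∂μ
  have hbm : m ^ 2 = 1 - b := by simp only [b, m, integral_sub_integral_sq hg, h1]; ring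
  have hb0 : 0 ≤ b := integral_nonneg fun _ => sq_nonneg _
  have hb1 : b ^ 2 ≤ b := by nlinarith [sq_nonneg m]
  have hgm : MemLp (fun x => g x - m) ∞ μ := hg.sub (memLp_const m)
  have iE := integrable_sq_mul_log_sq hg
  have i2 := hg.integrable_comp_of_continuous (continuous_pow 2)
  have iE2 : Integrable (fun x => g x ^ 2 * log (g x ^ 2) - g x ^ 2) μ := iE.sub i2
  have i2m := (hgm.integrable_comp_of_continuous (continuous_pow 2)).const_mul 15
  have ipm := (integrable_abs_rpow hgm (by linarith : 0 ≤ p)).const_mul (2 ^ p / (p / 2 - 1) + 1)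
  have hmono := integral_mono (iE2.fun_add (integrable_const 1))
    ((i2m.fun_add (integrable_const (3 * b ^ 2))).fun_add ipm)
    fun x => sq_mul_log_sq_sub_sq_add_one_le hp hbm hb0
  have hlhs :
      ∫ x, g x ^ 2 * log (g x ^ 2) - g x ^ 2 + 1 ∂μ = ∫ x, g x ^ 2 * log (g x ^ 2) ∂μ := by
    rw [integral_add iE2 (integrable_const 1), integral_sub iE i2, h1]
    simp
  have hrhs :
      ∫ x, 15 * (g x - m) ^ 2 + 3 * b ^ 2 + (2 ^ p / (p / 2 - 1) + 1) * |g x - m| ^ p ∂μ =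
        15 * b + 3 * b ^ 2 + (2 ^ p / (p / 2 - 1) + 1) * ∫ x, |g x - m| ^ p ∂μ := by
    rw [integral_add (i2m.fun_add (integrable_const _)) ipm, integral_add i2m (integrable_const _)]
    simp [b, integral_const_mul]
  rw [hlhs, hrhs] at hmono
  linarith

theorem exists_integral_sq_mul_log_sq_le_of_poincare_sobolev {p P C₁ C₂ : ℝ} (hp : 2 < p)
    (hP : 0 < P) (hC₂ : 1 ≤ C₂) :
    ∃ L, 0 < L ∧ ∀ g : α → ℝ, MemLp g ∞ μ → ∀ G, 0 ≤ G → ∫ x, g x ^ 2 ∂μ = 1 →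
      ∫ x, (g x - ∫ y, g y ∂μ) ^ 2 ∂μ ≤ P * G →
      (∫ x, |g x| ^ p ∂μ) ^ (2 / p) ≤ C₁ * G + C₂ →
      (∫ x, |g x - ∫ y, g y ∂μ| ^ p ∂μ) ^ (2 / p) ≤
        C₁ * G + C₂ * ∫ x, (g x - ∫ y, g y ∂μ) ^ 2 ∂μ →
      ∫ x, g x ^ 2 * log (g x ^ 2) ∂μ ≤ L * G := by
  set K := max C₁ 0 + C₂ * P
  have hK : 0 ≤ K := by positivity
  have hlogC₂ : 0 ≤ log C₂ := log_nonneg hC₂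
  have hA : 0 ≤ (2 ^ p / (p / 2 - 1) + 1) * K :=
    mul_nonneg (add_nonneg (div_nonneg (by positivity) (by linarith)) zero_le_one) hK
  have hB : 0 ≤ p / (p - 2) * (max C₁ 0 / C₂ + K * log C₂) :=
    mul_nonneg (div_nonneg (by linarith) (by linarith))
      (add_nonneg (div_nonneg (le_max_right _ _) (by linarith)) (mul_nonneg hK hlogC₂))
  refine ⟨18 * P + (2 ^ p / (p / 2 - 1) + 1) * K + p / (p - 2) * (max C₁ 0 / C₂ + K * log C₂),
    by positivity, fun g hg G hG h1 hPg hSg hSgm => ?_⟩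
  have hC₁G : C₁ * G ≤ max C₁ 0 * G := by gcongr; exact le_max_left _ _
  rcases le_or_gt 1 (K * G) with hKG | hKG
  · calc ∫ x, g x ^ 2 * log (g x ^ 2) ∂μ ≤ p / (p - 2) * (C₁ * G / C₂ + log C₂) :=
          integral_sq_mul_log_sq_le_of_sobolev hg hp h1 (by linarith) hSg
      _ ≤ p / (p - 2) * (max C₁ 0 * G / C₂ + log C₂ * (K * G)) := by
          have : 0 ≤ p / (p - 2) := div_nonneg (by linarith) (by linarith)
          gcongr
          exact le_mul_of_one_le_right hlogC₂ hKG
      _ = p / (p - 2) * (max C₁ 0 / C₂ + K * log C₂) * G := by ring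
      _ ≤ _ := by nlinarith [mul_nonneg hP.le hG, mul_nonneg hA hG]
  · have hY := le_of_rpow_two_div_le hp.le (integral_nonneg fun _ => rpow_nonneg (abs_nonneg _) _)
      hKG.le (hSgm.trans (by nlinarith))
    calc ∫ x, g x ^ 2 * log (g x ^ 2) ∂μ ≤ _ := integral_sq_mul_log_sq_le_variance_add hg hp h1
      _ ≤ 18 * (P * G) + (2 ^ p / (p / 2 - 1) + 1) * (K * G) := by
          have : 0 ≤ 2 ^ p / (p / 2 - 1) + 1 :=
            add_nonneg (div_nonneg (by positivity) (by linarith)) zero_le_one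
          gcongr
      _ ≤ _ := by nlinarith [mul_nonneg hB hG]

end ProbabilityMeasure

theorem stmt_18_general (N : ℕ) (hN : 3 ≤ N)
    (Ω : Set (EuclideanSpace ℝ (Fin N))) (hΩb : Bornology.IsBounded Ω)
    (hvol : volume Ω = 1)
    (q P C₁ C₂ : ℝ) (hq : 1 / q = 1 / 2 - 1 / (N : ℝ)) (hP : 0 < P)
    (hPoincare : ∀ φ : EuclideanSpace ℝ (Fin N) → ℝ, ContDiff ℝ 1 φ →
      (∫ x in Ω, (φ x - ∫ y in Ω, φ y) ^ 2) ≤ P * ∫ x in Ω, ‖fderiv ℝ φ x‖ ^ 2)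
    (hSobolev : ∀ φ : EuclideanSpace ℝ (Fin N) → ℝ, ContDiff ℝ 1 φ →
      (∫ x in Ω, |φ x| ^ q) ^ (2 / q) ≤
        C₁ * (∫ x in Ω, ‖fderiv ℝ φ x‖ ^ 2) + C₂ * ∫ x in Ω, (φ x) ^ 2) :
    ∃ L : ℝ, 0 < L ∧ ∀ φ : EuclideanSpace ℝ (Fin N) → ℝ, ContDiff ℝ 1 φ →
      (∫ x in Ω, (φ x) ^ 2 * Real.log ((φ x) ^ 2 / ∫ y in Ω, (φ y) ^ 2)) ≤
        L * ∫ x in Ω, ‖fderiv ℝ φ x‖ ^ 2 := by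
  have hq2 : 2 < q := two_lt_of_one_div_eq_half_sub (by exact_mod_cast hN) hq
  have : IsProbabilityMeasure (volume.restrict Ω) :=
    ⟨by rw [Measure.restrict_apply_univ, hvol]⟩
  have hC₂ : 1 ≤ C₂ := by simpa using hSobolev (fun _ => 1) contDiff_const
  obtain ⟨L, hL, hLS⟩ := exists_integral_sq_mul_log_sq_le_of_poincare_sobolev
    (μ := volume.restrict Ω) (C₁ := C₁) hq2 hP hC₂
  refine ⟨L, hL, fun φ hφ => integral_sq_mul_log_div_le_of_integral_sq_eq_one _ hL.le
    (fun g hg h1 => ?_) hφ⟩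
  refine hLS g (hg.continuous.memLp_top_restrict_of_isBounded _ hΩb) _
    (integral_nonneg fun _ => sq_nonneg _) h1 (hPoincare g hg) ?_ ?_
  · simpa [h1] using hSobolev g hg
  · simpa only [fderiv_sub_const] using
      hSobolev (fun x => g x - ∫ y in Ω, g y) (hg.sub contDiff_const)

theorem stmt_18 (N : ℕ) (hN : 3 ≤ N)
    (Ω : Set (EuclideanSpace ℝ (Fin N))) (hΩb : Bornology.IsBounded Ω)
    (hΩm : MeasurableSet Ω) (hvol : volume Ω = 1)
    (q P C₁ C₂ : ℝ) (hq : 1 / q = 1 / 2 - 1 / (N : ℝ)) (hP : 0 < P)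
    (hPoincare : ∀ φ : EuclideanSpace ℝ (Fin N) → ℝ, ContDiff ℝ 1 φ →
      (∫ x in Ω, (φ x - ∫ y in Ω, φ y) ^ 2) ≤ P * ∫ x in Ω, ‖fderiv ℝ φ x‖ ^ 2)
    (hSobolev : ∀ φ : EuclideanSpace ℝ (Fin N) → ℝ, ContDiff ℝ 1 φ →
      (∫ x in Ω, |φ x| ^ q) ^ (2 / q) ≤
        C₁ * (∫ x in Ω, ‖fderiv ℝ φ x‖ ^ 2) + C₂ * ∫ x in Ω, (φ x) ^ 2) :
    ∃ L : ℝ, 0 < L ∧ ∀ φ : EuclideanSpace ℝ (Fin N) → ℝ, ContDiff ℝ 1 φ →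
      (∫ x in Ω, (φ x) ^ 2 * Real.log ((φ x) ^ 2 / ∫ y in Ω, (φ y) ^ 2)) ≤
        L * ∫ x in Ω, ‖fderiv ℝ φ x‖ ^ 2 :=
  stmt_18_general N hN Ω hΩb hvol q P C₁ C₂ hq hP hPoincare hSobolev
end
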